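/- arXiv:1703.00111 — 3 statements merged into one kernel-verified Lean document; each statement's English description precedes it below -/
import Mathlib

section
/- For the 2×2 unitary Z_θ = diag(1, e^{iθ}), the channel ρ ↦ Z_θ ρ Z_θ† equals the real linear combination ((1+cos θ − sin θ)/2)·I + ((1−cos θ − sin θ)/2)·Z + (sin θ)·S, where I is the identity channel, Z(ρ) = ZρZ† with the Pauli Z, and S(ρ) = SρS† with the phase gate S = diag(1,i). -/
open Matrix

theorem stmt0 (θ : ℝ) (ρ : Matrix (Fin 2) (Fin 2) ℂ) :
    let Zθ : Matrix (Fin 2) (Fin 2) ℂ := !![1, 0; 0, Complex.exp (θ * Complex.I)]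
    let Z : Matrix (Fin 2) (Fin 2) ℂ := !![1, 0; 0, -1]
    let S : Matrix (Fin 2) (Fin 2) ℂ := !![1, 0; 0, Complex.I]
    Zθ * ρ * Zθᴴ =
      (((1 + Real.cos θ - Real.sin θ) / 2 : ℝ) : ℂ) • ρ
        + (((1 - Real.cos θ - Real.sin θ) / 2 : ℝ) : ℂ) • (Z * ρ * Zᴴ)
        + ((Real.sin θ : ℝ) : ℂ) • (S * ρ * Sᴴ) := by
  intro Zθ Z S
  have h : Complex.exp (θ * Complex.I) = Complex.cos θ + Complex.sin θ * Complex.I :=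
    Complex.exp_mul_I _
  have hc : (starRingEnd ℂ) (Complex.cos θ) = Complex.cos θ := by
    rw [← Complex.cos_conj, Complex.conj_ofReal]
  have hs : (starRingEnd ℂ) (Complex.sin θ) = Complex.sin θ := by
    rw [← Complex.sin_conj, Complex.conj_ofReal]
  have h2 : Complex.sin θ ^ 2 + Complex.cos θ ^ 2 = 1 := Complex.sin_sq_add_cos_sq _
  ext i j
  fin_cases i <;> fin_cases j <;>
    simp [Zθ, Z, S, mul_apply, Fin.sum_univ_two, h, conjTranspose_apply,
      Matrix.vecMul, dotProduct, map_add, _root_.map_mul, hc, hs,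
      Complex.conj_ofReal, Complex.conj_I, Matrix.smul_apply, Matrix.add_apply] <;>
    ring_nf
  rw [Complex.I_sq]
  linear_combination (ρ 1 1) * h2
end

section
/- The T-gate channel ρ ↦ TρT† with T = diag(1, e^{iπ/4}) equals (1/2)·I + (1/2 − 1/√2)·Z + (1/√2)·S as a linear map on 2×2 matrices, where I, Z, S are the channels of conjugation by the identity, Pauli Z, and phase gate S = diag(1,i) respectively. -/
/-!
Conjugation by `diag(1, u)` fixes the diagonal entries of `ρ` and multiplies the off-diagonal ones
by `u` and `ū`; for unimodular `u` it is therefore a real-affine function of `u`. The theorem is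
this affinity applied to `e^{iπ/4} = ½ · 1 + (½ - 1/√2) · (-1) + (1/√2) · i`, whose real weights
sum to `1`.
-/

open Matrix

theorem diagonal_mul_mul_conjTranspose_diagonal_apply {m n α : Type*} [Fintype m] [DecidableEq m]
    [Fintype n] [DecidableEq n] [Semiring α] [StarRing α] (d : m → α) (e : n → α)
    (A : Matrix m n α) (i : m) (j : n) :
    (diagonal d * A * (diagonal e)ᴴ) i j = d i * A i j * star (e j) := by
  rw [diagonal_conjTranspose, mul_diagonal, diagonal_mul, Pi.star_apply]

theorem phase_conj_eq_sum_smul_of_eq_sum {ι : Type*} (s : Finset ι) (a : ι → ℝ) (v : ι → ℂ)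
    (hv : ∀ k ∈ s, ‖v k‖ = 1) (ha : ∑ k ∈ s, a k = 1) {u : ℂ} (hu1 : ‖u‖ = 1)
    (hu : u = ∑ k ∈ s, a k * v k) (ρ : Matrix (Fin 2) (Fin 2) ℂ) :
    !![1, 0; 0, u] * ρ * !![1, 0; 0, u]ᴴ =
      ∑ k ∈ s, (a k : ℂ) • (!![1, 0; 0, v k] * ρ * !![1, 0; 0, v k]ᴴ) := by
  have hdiag (x : ℂ) : !![1, 0; 0, x] = diagonal ![1, x] := by simp [diagonal_fin_two]
  have ha' : ∑ k ∈ s, (a k : ℂ) = 1 := by exact_mod_cast ha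
  have hu' : star u = ∑ k ∈ s, a k * star (v k) := by simp [hu]
  have hunit {z : ℂ} (hz : ‖z‖ = 1) : z * star z = 1 := by
    rw [Complex.star_def, Complex.mul_conj', hz]; norm_num
  ext i j
  simp only [hdiag, Matrix.sum_apply, Matrix.smul_apply, smul_eq_mul,
    diagonal_mul_mul_conjTranspose_diagonal_apply]
  fin_cases i <;> fin_cases j <;> simp only [Fin.zero_eta, Fin.mk_one, cons_val_zero, cons_val_one,
    star_one, one_mul, mul_one]
  · rw [← Finset.sum_mul, ha', one_mul]
  · rw [hu', Finset.mul_sum]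
    exact Finset.sum_congr rfl fun k _ => by ring
  · rw [hu, Finset.sum_mul]
    exact Finset.sum_congr rfl fun k _ => by ring
  · calc u * ρ 1 1 * star u = ρ 1 1 := by rw [mul_right_comm, hunit hu1, one_mul]
      _ = (∑ k ∈ s, (a k : ℂ)) * ρ 1 1 := by rw [ha', one_mul]
      _ = ∑ k ∈ s, a k * (v k * ρ 1 1 * star (v k)) := by
        rw [Finset.sum_mul]
        refine Finset.sum_congr rfl fun k hk => ?_
        rw [mul_right_comm (v k), hunit (hv k hk)]
        ring

theorem exp_pi_div_four_mul_I :
    Complex.exp ((Real.pi / 4 : ℝ) * Complex.I) = (1 + Complex.I) / (Real.sqrt 2 : ℝ) := by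
  rw [Complex.exp_mul_I, ← Complex.ofReal_cos, ← Complex.ofReal_sin,
    Real.cos_pi_div_four, Real.sin_pi_div_four]
  have h2 : ((Real.sqrt 2 : ℝ) : ℂ) ^ 2 = 2 := by norm_cast; simp
  have hs : ((Real.sqrt 2 : ℝ) : ℂ) ≠ 0 := by simp
  push_cast
  field_simp
  linear_combination (1 + Complex.I) * h2

theorem stmt1 (ρ : Matrix (Fin 2) (Fin 2) ℂ) :
    let T : Matrix (Fin 2) (Fin 2) ℂ := !![1, 0; 0, Complex.exp ((Real.pi / 4 : ℝ) * Complex.I)]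
    let Z : Matrix (Fin 2) (Fin 2) ℂ := !![1, 0; 0, -1]
    let S : Matrix (Fin 2) (Fin 2) ℂ := !![1, 0; 0, Complex.I]
    T * ρ * Tᴴ =
      ((1 / 2 : ℝ) : ℂ) • ρ
        + (((1 / 2 - 1 / Real.sqrt 2 : ℝ)) : ℂ) • (Z * ρ * Zᴴ)
        + (((1 / Real.sqrt 2 : ℝ)) : ℂ) • (S * ρ * Sᴴ) := by
  intro T Z S
  have hphase : Complex.exp ((Real.pi / 4 : ℝ) * Complex.I) =
      ∑ k, (![1 / 2, 1 / 2 - 1 / Real.sqrt 2, 1 / Real.sqrt 2] k : ℂ) * ![1, -1, Complex.I] k := by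
    rw [exp_pi_div_four_mul_I, Fin.sum_univ_three]
    simp
    ring
  have key := phase_conj_eq_sum_smul_of_eq_sum Finset.univ _ _ (by simp [Fin.forall_fin_succ])
    (by simp [Fin.sum_univ_three]; ring) (Complex.norm_exp_ofReal_mul_I _) hphase ρ
  simp only [Fin.sum_univ_three, cons_val_zero, cons_val_one, cons_val_two, head_cons, tail_cons,
    ← one_fin_two, conjTranspose_one, one_mul, mul_one] at key
  exact key
end

section
/- The single-qubit amplitude damping channel A_γ(ρ) = E₀ρE₀† + E₁ρE₁†, with E₀ = diag(1, √(1−γ)) and E₁ = [[0, √γ],[0,0]], equals the linear combination ((1−γ+√(1−γ))/2)·I + ((1−γ−√(1−γ))/2)·Z + γ·R_Z, where I is the identity channel, Z(ρ)=ZρZ† with Pauli Z, and R_Z(ρ) = P₀ρP₀ + X P₁ ρ P₁ X with P₀ = |0⟩⟨0|, P₁ = |1⟩⟨1|, X the Pauli X (the reset-to-|0⟩ channel). -/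
open Matrix

theorem stmt2 (γ : ℝ) (hγ0 : 0 ≤ γ) (hγ1 : γ ≤ 1) (ρ : Matrix (Fin 2) (Fin 2) ℂ) :
    let E0 : Matrix (Fin 2) (Fin 2) ℂ := !![1, 0; 0, (Real.sqrt (1 - γ) : ℂ)]
    let E1 : Matrix (Fin 2) (Fin 2) ℂ := !![0, (Real.sqrt γ : ℂ); 0, 0]
    let Z : Matrix (Fin 2) (Fin 2) ℂ := !![1, 0; 0, -1]
    let X : Matrix (Fin 2) (Fin 2) ℂ := !![0, 1; 1, 0]
    let P0 : Matrix (Fin 2) (Fin 2) ℂ := !![1, 0; 0, 0]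
    let P1 : Matrix (Fin 2) (Fin 2) ℂ := !![0, 0; 0, 1]
    E0 * ρ * E0ᴴ + E1 * ρ * E1ᴴ =
      ((((1 - γ) + Real.sqrt (1 - γ)) / 2 : ℝ) : ℂ) • ρ
        + ((((1 - γ) - Real.sqrt (1 - γ)) / 2 : ℝ) : ℂ) • (Z * ρ * Zᴴ)
        + ((γ : ℝ) : ℂ) • (P0 * ρ * P0 + X * (P1 * ρ * P1) * X) := by
  intro E0 E1 Z X P0 P1
  have h1 : ((Real.sqrt (1 - γ) : ℂ)) * ((Real.sqrt (1 - γ) : ℂ)) = ((1 - γ : ℝ) : ℂ) := by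
    norm_cast
    exact Real.mul_self_sqrt (by linarith)
  have h2 : ((Real.sqrt γ : ℂ)) * ((Real.sqrt γ : ℂ)) = ((γ : ℝ) : ℂ) := by
    norm_cast
    exact Real.mul_self_sqrt hγ0
  ext i j
  fin_cases i <;> fin_cases j <;>
    simp [E0, E1, Z, X, P0, P1, Matrix.mul_apply, Fin.sum_univ_two,
      Matrix.conjTranspose_apply, Matrix.smul_apply, Matrix.vecMul, dotProduct] <;>
    push_cast <;> ring_nf <;>
    simp only [pow_two, h1, h2] <;> push_cast <;> ring
end
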